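/- Let n ≥ 1, let A : ℝ^n → Sym_n(ℝ) with A(y) positive semidefinite for every y, and let H : ℝ^n × ℝ^n → ℝ be such that q ↦ H(q, y) is convex for every y. Fix p, q ∈ ℝ^n, t ∈ [0,1], and set r = t p + (1−t) q. Suppose w_p, w_q, w_r : ℝ^n → ℝ are C², ℤ^n-periodic functions and γ_p, γ_q, γ_r ∈ ℝ are real numbers such that −tr(A(y) D²w_s(y)) + H(∇w_s(y) + s, y) = γ_s for all y ∈ ℝ^n and each s ∈ {p, q, r}. Then γ_r ≤ t γ_p + (1−t) γ_q. (Convexity of the effective Hamiltonian.) -/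

import Mathlib

open scoped InnerProductSpace

/-- The Hessian matrix of `w : ℝⁿ → ℝ` at `y`, with entries the iterated directional
derivatives along the standard basis vectors. -/
noncomputable def hessM {n : ℕ} (w : EuclideanSpace ℝ (Fin n) → ℝ)
    (y : EuclideanSpace ℝ (Fin n)) : Matrix (Fin n) (Fin n) ℝ :=
  fun i j =>
    fderiv ℝ (fun z => fderiv ℝ w z (EuclideanSpace.single j 1)) y (EuclideanSpace.single i 1)

/-- An integer vector `k ∈ ℤⁿ` viewed as an element of `ℝⁿ`. -/
noncomputable def intVec {n : ℕ} (k : Fin n → ℤ) : EuclideanSpace ℝ (Fin n) :=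
  (WithLp.equiv 2 (Fin n → ℝ)).symm (fun i => (k i : ℝ))

/-- A function on `ℝⁿ` is `ℤⁿ`-periodic. -/
def ZPeriodic {n : ℕ} (f : EuclideanSpace ℝ (Fin n) → ℝ) : Prop :=
  ∀ (y : EuclideanSpace ℝ (Fin n)) (k : Fin n → ℤ), f (y + intVec k) = f y

/-!
Let `v = t wp + (1 - t) wq - wr`. It is continuous and `ℤⁿ`-periodic, so it attains its maximum
at some `y₀`. There `∇v = 0`, so `∇wr + r` is the convex combination of `∇wp + p` and `∇wq + q`
with weights `t, 1 - t`, and `D²v ≤ 0`, so `tr (A D²v) ≤ 0` because `A` is positive semidefinite.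
Subtracting the three cell equations at `y₀` and using convexity of `H` gives the inequality.
-/

open Set Filter Topology Matrix

theorem ZPeriodic.exists_forall_ge {n : ℕ} {v : EuclideanSpace ℝ (Fin n) → ℝ}
    (hper : ZPeriodic v) (hv : Continuous v) : ∃ y₀, ∀ y, v y ≤ v y₀ := by
  set K := WithLp.toLp 2 '' Icc (0 : Fin n → ℝ) 1
  have hK : IsCompact K := isCompact_Icc.image (PiLp.continuous_toLp 2 _)
  obtain ⟨y₀, -, hy₀⟩ := hK.exists_isMaxOn
    ⟨_, mem_image_of_mem _ (left_mem_Icc.2 zero_le_one)⟩ hv.continuousOn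
  refine ⟨y₀, fun y => ?_⟩
  have hfract : y + intVec (fun i => -⌊y i⌋) ∈ K := by
    refine ⟨fun i => Int.fract (y i),
      ⟨fun i => Int.fract_nonneg _, fun i => (Int.fract_lt_one _).le⟩, ?_⟩
    ext i
    simp [intVec, Int.fract, sub_eq_add_neg]
  calc v y = v (y + intVec (fun i => -⌊y i⌋)) := (hper y _).symm
    _ ≤ v y₀ := hy₀ hfract

theorem Matrix.PosSemidef.trace_mul_nonpos {ι : Type*} [Fintype ι] [DecidableEq ι]
    {A M : Matrix ι ι ℝ} (hA : A.PosSemidef) (hM : ∀ u, u ⬝ᵥ (M *ᵥ u) ≤ 0) :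
    (A * M).trace ≤ 0 := by
  obtain ⟨B, rfl⟩ : ∃ B : Matrix ι ι ℝ, A = Bᴴ * B := by
    open scoped MatrixOrder Matrix.Norms.L2Operator in
    exact CStarAlgebra.nonneg_iff_eq_star_mul_self.mp hA.nonneg
  have hdiag : ∀ i, (B * M * Bᴴ) i i = B i ⬝ᵥ (M *ᵥ B i) := by
    intro i
    rw [Matrix.mul_apply', dotProduct_mulVec]
    simp only [conjTranspose_apply, star_trivial]
    rfl
  rw [← Matrix.trace_mul_cycle, Matrix.trace]
  exact Finset.sum_nonpos fun i _ => (hdiag i).trans_le (hM (B i))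

theorem IsLocalMax.deriv_deriv_nonpos {f : ℝ → ℝ} {x₀ : ℝ} (hmax : IsLocalMax f x₀)
    (hc : ContinuousAt f x₀) : deriv (deriv f) x₀ ≤ 0 := by
  by_contra! hpos
  have hright : ∀ᶠ x in 𝓝[>] x₀, 0 < deriv f x ∧ f x ≤ f x₀ :=
    (deriv_pos_right_of_sign_deriv (nhdsWithin_le_nhds
      (eventually_nhdsWithin_sign_eq_of_deriv_pos hpos hmax.deriv_eq_zero))).and
      (nhdsWithin_le_nhds hmax)
  obtain ⟨u, hu, hsub⟩ := mem_nhdsGT_iff_exists_Ioo_subset.mp hright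
  obtain ⟨m, hm⟩ : ∃ m, m ∈ Ioo x₀ u := exists_between hu
  have hderiv : ∀ x ∈ Ioc x₀ m, 0 < deriv f x :=
    fun x hx => (hsub ⟨hx.1, hx.2.trans_lt hm.2⟩).1
  have hcont : ContinuousOn f (Icc x₀ m) := by
    intro x hx
    rcases hx.1.eq_or_lt with rfl | hx₀
    · exact hc.continuousWithinAt
    · exact (differentiableAt_of_deriv_ne_zero
        (hderiv x ⟨hx₀, hx.2⟩).ne').continuousAt.continuousWithinAt
  have hmono : StrictMonoOn f (Icc x₀ m) := strictMonoOn_of_deriv_pos (convex_Icc _ _) hcont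
    (by rw [interior_Icc]; exact fun x hx => hderiv x (Ioo_subset_Ioc_self hx))
  exact (hmono (left_mem_Icc.2 hm.1.le) (right_mem_Icc.2 hm.1.le) hm.1).not_ge (hsub hm).2

theorem IsLocalMax.fderiv_fderiv_apply_self_nonpos {E : Type*} [NormedAddCommGroup E]
    [NormedSpace ℝ E] {f : E → ℝ} {x₀ : E} (hmax : IsLocalMax f x₀) (hf : Differentiable ℝ f)
    (hf' : DifferentiableAt ℝ (fderiv ℝ f) x₀) (u : E) : fderiv ℝ (fderiv ℝ f) x₀ u u ≤ 0 := by
  have hline : ∀ s : ℝ, HasDerivAt (fun s : ℝ => x₀ + s • u) u s := fun s => by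
    simpa using ((hasDerivAt_id s).smul_const u).const_add x₀
  have hderiv : deriv (fun s : ℝ => f (x₀ + s • u)) = fun s => fderiv ℝ f (x₀ + s • u) u :=
    funext fun s => ((hf _).hasFDerivAt.comp_hasDerivAt s (hline s)).deriv
  have hderiv2 :
      deriv (fun s : ℝ => fderiv ℝ f (x₀ + s • u) u) 0 = fderiv ℝ (fderiv ℝ f) x₀ u u := by
    have hD : HasFDerivAt (fun z => fderiv ℝ f z u)
        ((ContinuousLinearMap.apply ℝ ℝ u).comp (fderiv ℝ (fderiv ℝ f) x₀))
        (x₀ + (0 : ℝ) • u) := by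
      rw [zero_smul, add_zero]
      exact (ContinuousLinearMap.apply ℝ ℝ u).hasFDerivAt.comp x₀ hf'.hasFDerivAt
    exact (hD.comp_hasDerivAt 0 (hline 0)).deriv
  have hmax' : IsLocalMax (fun s : ℝ => f (x₀ + s • u)) 0 :=
    IsLocalMax.comp_continuous (g := fun s : ℝ => x₀ + s • u) (by simpa using hmax)
      (hline 0).continuousAt
  simpa [hderiv, hderiv2] using hmax'.deriv_deriv_nonpos
    ((hf _).continuousAt.comp (hline 0).continuousAt)

theorem ContDiff.differentiable_fderiv_two {E F : Type*} [NormedAddCommGroup E]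
    [NormedSpace ℝ E] [NormedAddCommGroup F] [NormedSpace ℝ F] {f : E → F}
    (hf : ContDiff ℝ 2 f) : Differentiable ℝ (fderiv ℝ f) :=
  (hf.fderiv_right (m := 1) le_rfl).differentiable one_ne_zero

section Gradient

variable {E : Type*} [NormedAddCommGroup E] [InnerProductSpace ℝ E] [CompleteSpace E]
  {f g : E → ℝ}

theorem gradient_add {x : E} (hf : DifferentiableAt ℝ f x) (hg : DifferentiableAt ℝ g x) :
    gradient (f + g) x = gradient f x + gradient g x := by
  simp only [gradient, fderiv_add hf hg, map_add]

theorem gradient_sub {x : E} (hf : DifferentiableAt ℝ f x) (hg : DifferentiableAt ℝ g x) :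
    gradient (f - g) x = gradient f x - gradient g x := by
  simp only [gradient, fderiv_sub hf hg, map_sub]

theorem gradient_const_smul (c : ℝ) : gradient (c • f) = c • gradient f := by
  ext x : 1
  simp only [gradient, fderiv_const_smul_field, Pi.smul_apply, map_smul]

end Gradient

section Hessian

variable {n : ℕ} {f g : EuclideanSpace ℝ (Fin n) → ℝ}

theorem hessM_apply {y : EuclideanSpace ℝ (Fin n)} (hf : DifferentiableAt ℝ (fderiv ℝ f) y)
    (i j : Fin n) :
    hessM f y i j =
      fderiv ℝ (fderiv ℝ f) y (EuclideanSpace.single i 1) (EuclideanSpace.single j 1) := by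
  simp [hessM, fderiv_clm_apply hf (differentiableAt_const _)]

theorem hessM_const_smul (c : ℝ) : hessM (c • f) = c • hessM f := by
  funext y; ext i j
  have h : (fun z => fderiv ℝ (c • f) z (EuclideanSpace.single j 1)) =
      c • fun z => fderiv ℝ f z (EuclideanSpace.single j 1) := by
    rw [fderiv_const_smul_field]; rfl
  simp only [hessM]
  rw [h, fderiv_const_smul_field]
  rfl

theorem hessM_add (hf : ContDiff ℝ 2 f) (hg : ContDiff ℝ 2 g) :
    hessM (f + g) = hessM f + hessM g := by
  have hfg : fderiv ℝ (f + g) = fderiv ℝ f + fderiv ℝ g := funext fun x =>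
    fderiv_add (hf.differentiable two_ne_zero x) (hg.differentiable two_ne_zero x)
  funext y; ext i j
  have hf' := hf.differentiable_fderiv_two y
  have hg' := hg.differentiable_fderiv_two y
  rw [Pi.add_apply, Matrix.add_apply, hessM_apply (hfg ▸ hf'.add hg'), hfg, fderiv_add hf' hg',
    hessM_apply hf', hessM_apply hg']
  rfl

theorem hessM_sub (hf : ContDiff ℝ 2 f) (hg : ContDiff ℝ 2 g) :
    hessM (f - g) = hessM f - hessM g := by
  have hg' : ContDiff ℝ 2 ((-1 : ℝ) • g) := hg.const_smul (-1 : ℝ)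
  rw [sub_eq_add_neg, ← neg_one_smul ℝ g, hessM_add hf hg', hessM_const_smul, neg_one_smul,
    ← sub_eq_add_neg]

theorem dotProduct_hessM_mulVec {y : EuclideanSpace ℝ (Fin n)}
    (hf : DifferentiableAt ℝ (fderiv ℝ f) y) (u : Fin n → ℝ) :
    u ⬝ᵥ (hessM f y *ᵥ u) = fderiv ℝ (fderiv ℝ f) y (WithLp.toLp 2 u) (WithLp.toLp 2 u) := by
  have hu : WithLp.toLp 2 u = ∑ i, u i • EuclideanSpace.single i (1 : ℝ) := by
    ext i; simp [Pi.single_apply]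
  simp only [hu, map_sum, map_smul, _root_.sum_apply, _root_.smul_apply, smul_eq_mul, dotProduct,
    mulVec, hessM_apply hf, Finset.mul_sum]
  rw [Finset.sum_comm]
  exact Finset.sum_congr rfl fun i _ => Finset.sum_congr rfl fun j _ => by ring

theorem IsLocalMax.dotProduct_hessM_mulVec_nonpos {y₀ : EuclideanSpace ℝ (Fin n)}
    (hmax : IsLocalMax f y₀) (hf : ContDiff ℝ 2 f) (u : Fin n → ℝ) :
    u ⬝ᵥ (hessM f y₀ *ᵥ u) ≤ 0 := by
  rw [dotProduct_hessM_mulVec (hf.differentiable_fderiv_two y₀)]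
  exact hmax.fderiv_fderiv_apply_self_nonpos (hf.differentiable two_ne_zero)
    (hf.differentiable_fderiv_two y₀) _

end Hessian

theorem effective_hamiltonian_convex_general
    (n : ℕ)
    (A : EuclideanSpace ℝ (Fin n) → Matrix (Fin n) (Fin n) ℝ)
    (hApsd : ∀ y, (A y).PosSemidef)
    (H : EuclideanSpace ℝ (Fin n) → EuclideanSpace ℝ (Fin n) → ℝ)
    (hHconv : ∀ y, ConvexOn ℝ Set.univ (fun q => H q y))
    (p q : EuclideanSpace ℝ (Fin n)) (t : ℝ) (ht : t ∈ Set.Icc (0:ℝ) 1)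
    (wp wq wr : EuclideanSpace ℝ (Fin n) → ℝ)
    (γp γq γr : ℝ)
    (hwp : ContDiff ℝ 2 wp) (hwq : ContDiff ℝ 2 wq) (hwr : ContDiff ℝ 2 wr)
    (hwpper : ZPeriodic wp) (hwqper : ZPeriodic wq) (hwrper : ZPeriodic wr)
    (heqp : ∀ y, -((A y) * hessM wp y).trace + H (gradient wp y + p) y = γp)
    (heqq : ∀ y, -((A y) * hessM wq y).trace + H (gradient wq y + q) y = γq)
    (heqr : ∀ y, -((A y) * hessM wr y).trace
      + H (gradient wr y + (t • p + (1 - t) • q)) y = γr) :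
    γr ≤ t * γp + (1 - t) * γq := by
  obtain ⟨ht0, ht1⟩ := ht
  set v := t • wp + (1 - t) • wq - wr
  have hvp : ContDiff ℝ 2 (t • wp) := hwp.const_smul t
  have hvq : ContDiff ℝ 2 ((1 - t) • wq) := hwq.const_smul (1 - t)
  have hvpq : ContDiff ℝ 2 (t • wp + (1 - t) • wq) := hvp.add hvq
  have hv : ContDiff ℝ 2 v := hvpq.sub hwr
  have hvper : ZPeriodic v := fun y k => by simp [v, hwpper y k, hwqper y k, hwrper y k]
  obtain ⟨y₀, hy₀⟩ := hvper.exists_forall_ge hv.continuous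
  have hmax : IsLocalMax v y₀ := Eventually.of_forall hy₀
  have hgrad : gradient wr y₀ = t • gradient wp y₀ + (1 - t) • gradient wq y₀ := by
    have h0 : gradient v y₀ = 0 := by simp [gradient, hmax.fderiv_eq_zero]
    rwa [gradient_sub (hvpq.differentiable two_ne_zero y₀)
      (hwr.differentiable two_ne_zero y₀), gradient_add (hvp.differentiable two_ne_zero y₀)
      (hvq.differentiable two_ne_zero y₀), gradient_const_smul, gradient_const_smul,
      sub_eq_zero, eq_comm] at h0
  have htrace : t * (A y₀ * hessM wp y₀).trace + (1 - t) * (A y₀ * hessM wq y₀).trace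
      - (A y₀ * hessM wr y₀).trace ≤ 0 := by
    have h := (hApsd y₀).trace_mul_nonpos (hmax.dotProduct_hessM_mulVec_nonpos hv)
    rwa [hessM_sub hvpq hwr, hessM_add hvp hvq, hessM_const_smul, hessM_const_smul,
      Pi.sub_apply, Pi.add_apply, Pi.smul_apply, Pi.smul_apply, Matrix.mul_sub, Matrix.mul_add,
      Matrix.mul_smul, Matrix.mul_smul, trace_sub, trace_add, trace_smul, trace_smul,
      smul_eq_mul, smul_eq_mul] at h
  have hconv : H (gradient wr y₀ + (t • p + (1 - t) • q)) y₀
      ≤ t * H (gradient wp y₀ + p) y₀ + (1 - t) * H (gradient wq y₀ + q) y₀ := by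
    have h := (hHconv y₀).2 (mem_univ (gradient wp y₀ + p)) (mem_univ (gradient wq y₀ + q))
      ht0 (sub_nonneg.2 ht1) (add_sub_cancel t 1)
    rwa [smul_add, smul_add, add_add_add_comm, ← hgrad] at h
  linear_combination t * heqp y₀ + (1 - t) * heqq y₀ - heqr y₀ + htrace + hconv

/-- Convexity of the effective Hamiltonian. -/
theorem effective_hamiltonian_convex
    (n : ℕ) (hn : 1 ≤ n)
    (A : EuclideanSpace ℝ (Fin n) → Matrix (Fin n) (Fin n) ℝ)
    (hAsymm : ∀ y, (A y).IsSymm) (hApsd : ∀ y, (A y).PosSemidef)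
    (H : EuclideanSpace ℝ (Fin n) → EuclideanSpace ℝ (Fin n) → ℝ)
    (hHconv : ∀ y, ConvexOn ℝ Set.univ (fun q => H q y))
    (p q : EuclideanSpace ℝ (Fin n)) (t : ℝ) (ht : t ∈ Set.Icc (0:ℝ) 1)
    (wp wq wr : EuclideanSpace ℝ (Fin n) → ℝ)
    (γp γq γr : ℝ)
    (hwp : ContDiff ℝ 2 wp) (hwq : ContDiff ℝ 2 wq) (hwr : ContDiff ℝ 2 wr)
    (hwpper : ZPeriodic wp) (hwqper : ZPeriodic wq) (hwrper : ZPeriodic wr)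
    (heqp : ∀ y, -((A y) * hessM wp y).trace + H (gradient wp y + p) y = γp)
    (heqq : ∀ y, -((A y) * hessM wq y).trace + H (gradient wq y + q) y = γq)
    (heqr : ∀ y, -((A y) * hessM wr y).trace
      + H (gradient wr y + (t • p + (1 - t) • q)) y = γr) :
    γr ≤ t * γp + (1 - t) * γq :=
  effective_hamiltonian_convex_general n A hApsd H hHconv p q t ht wp wq wr γp γq γr hwp hwq hwr
    hwpper hwqper hwrper heqp heqq heqr
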